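/- arXiv:0909.2013 — 2 statements merged into one kernel-verified Lean document; each statement's English description precedes it below -/
import Mathlib

section
/- Let P be a polyhedral cone in a finite-dimensional rational vector space V and let F be a face of P. Let ⟨F⟩ denote the linear span of the differences x − y for x, y ∈ F, and let N_F = { y ∈ V* : ⟨x, y⟩ ≤ ⟨p, y⟩ for all x ∈ F, p ∈ P } be the normal cone of F. Then ⟨F⟩ equals the annihilator N_F^⊥ = { v ∈ V : ⟨v, y⟩ = 0 for all y ∈ N_F }. -/
/-- A polyhedral cone: intersection of finitely many closed half-spaces through the origin. -/
def IsPolyhedralCone {W : Type*} [AddCommGroup W] [Module ℚ W] (P : Set W) : Prop :=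
  ∃ s : Finset (Module.Dual ℚ W), P = {x | ∀ l ∈ s, 0 ≤ l x}

/-- The normal cone of a face `F` of `P`: functionals attaining their minimum over `P` on `F`. -/
def normalCone {W : Type*} [AddCommGroup W] [Module ℚ W] (P F : Set W) :
    Set (Module.Dual ℚ W) :=
  {y | ∀ x ∈ F, ∀ p ∈ P, y x ≤ y p}

/-- A face of a cone `P`: a subset of the form `face_y(P)` for some linear functional `y`. -/
def IsFace {W : Type*} [AddCommGroup W] [Module ℚ W] (P F : Set W) : Prop :=
  ∃ y : Module.Dual ℚ W, F = {x ∈ P | ∀ p ∈ P, y x ≤ y p}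

/-- Algebraic relative interior of a convex set. -/
def relint {W : Type*} [AddCommGroup W] [Module ℚ W] (F : Set W) : Set W :=
  {x ∈ F | ∀ y ∈ F, ∃ ε : ℚ, 0 < ε ∧ x + ε • (x - y) ∈ F}

/-- The linear span `⟨F⟩` of differences of elements of `F`. -/
def spanDiff {W : Type*} [AddCommGroup W] [Module ℚ W] (F : Set W) : Submodule ℚ W :=
  Submodule.span ℚ {v | ∃ x ∈ F, ∃ y ∈ F, v = x - y}

/-!
A nonempty face `F = face_y(P)` of the polyhedral cone `P = {l ≥ 0 : l ∈ s}` is the polyhedral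
cone cut out by `s` and `-y`. Those of its defining functionals that vanish on all of `F` lie in
the normal cone, and they are the only obstruction: starting from a relative interior point `x` of
`F`, a small step in any direction `v` they kill stays in `F`, so `v = ((x + εv) - x) / ε ∈ ⟨F⟩`.
Conversely a functional of the normal cone is constant on `F`, hence kills `⟨F⟩`.
-/

open Filter Topology

section

variable {W : Type*} [AddCommGroup W] [Module ℚ W]

def polyhedralCone (s : Finset (Module.Dual ℚ W)) : Set W :=
  {x | ∀ l ∈ s, 0 ≤ l x}

def face (P : Set W) (y : Module.Dual ℚ W) : Set W :=
  {x ∈ P | ∀ p ∈ P, y x ≤ y p}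

theorem apply_eq_apply_of_mem_normalCone {P F : Set W} {y : Module.Dual ℚ W} (hFP : F ⊆ P)
    (hy : y ∈ normalCone P F) {x x' : W} (hx : x ∈ F) (hx' : x' ∈ F) : y x = y x' :=
  le_antisymm (hy x hx x' (hFP hx')) (hy x' hx' x (hFP hx))

theorem spanDiff_le_ker_of_mem_normalCone {P F : Set W} {y : Module.Dual ℚ W} (hFP : F ⊆ P)
    (hy : y ∈ normalCone P F) : spanDiff F ≤ LinearMap.ker y := by
  rw [spanDiff, Submodule.span_le]
  rintro _ ⟨x, hx, x', hx', rfl⟩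
  simp [apply_eq_apply_of_mem_normalCone hFP hy hx hx']

theorem normalCone_empty (P : Set W) : normalCone P ∅ = Set.univ :=
  Set.eq_univ_of_forall fun _ _ hx => hx.elim

theorem mem_spanDiff_of_add_smul_mem {S : Set W} {x v : W} {ε : ℚ} (hε : ε ≠ 0) (hx : x ∈ S)
    (hxv : x + ε • v ∈ S) : v ∈ spanDiff S := by
  have hdiff : ε • v ∈ spanDiff S := Submodule.subset_span ⟨_, hxv, x, hx, by abel⟩
  simpa [smul_smul, inv_mul_cancel₀ hε] using (spanDiff S).smul_mem ε⁻¹ hdiff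

theorem nonneg_of_mem_face {P : Set W} (hP : ∀ x ∈ P, ∀ c : ℚ, 0 ≤ c → c • x ∈ P)
    {y : Module.Dual ℚ W} {x₀ : W} (hx₀ : x₀ ∈ face P y) : ∀ p ∈ P, 0 ≤ y p := by
  have h0 := hx₀.2 _ (hP x₀ hx₀.1 0 le_rfl)
  have h2 := hx₀.2 _ (hP x₀ hx₀.1 2 zero_le_two)
  simp only [zero_smul, map_zero, map_smul, smul_eq_mul] at h0 h2
  intro p hp
  linarith [hx₀.2 p hp]

variable (s : Finset (Module.Dual ℚ W))

theorem zero_mem_polyhedralCone : (0 : W) ∈ polyhedralCone s := fun _ _ => by simp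

theorem smul_mem_polyhedralCone {x : W} (hx : x ∈ polyhedralCone s) {c : ℚ} (hc : 0 ≤ c) :
    c • x ∈ polyhedralCone s := fun l hl => by
  simpa using mul_nonneg hc (hx l hl)

theorem face_polyhedralCone_eq_insert_neg [DecidableEq (Module.Dual ℚ W)]
    {y : Module.Dual ℚ W} (hne : (face (polyhedralCone s) y).Nonempty) :
    face (polyhedralCone s) y = polyhedralCone (insert (-y) s) := by
  obtain ⟨x₀, hx₀⟩ := hne
  have hy := nonneg_of_mem_face (fun x hx _ hc => smul_mem_polyhedralCone s hx hc) hx₀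
  ext x
  simp only [face, polyhedralCone, Set.mem_ofPred_eq, Finset.forall_mem_insert,
    LinearMap.neg_apply, neg_nonneg]
  exact ⟨fun ⟨hxP, hmin⟩ => ⟨by simpa using hmin 0 (zero_mem_polyhedralCone s), hxP⟩,
    fun ⟨hx0, hxP⟩ => ⟨hxP, fun p hp => hx0.trans (hy p hp)⟩⟩

/-- A relative interior point of the cone. -/
theorem exists_mem_polyhedralCone_forall_pos :
    ∃ x ∈ polyhedralCone s, ∀ l ∈ s, (∃ x' ∈ polyhedralCone s, 0 < l x') → 0 < l x := by
  have hwit : ∀ l : Module.Dual ℚ W, ∃ x ∈ polyhedralCone s,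
      (∃ x' ∈ polyhedralCone s, 0 < l x') → 0 < l x := by
    intro l
    by_cases h : ∃ x' ∈ polyhedralCone s, 0 < l x'
    · obtain ⟨x', hx', hpos⟩ := h
      exact ⟨x', hx', fun _ => hpos⟩
    · exact ⟨0, zero_mem_polyhedralCone s, fun h' => absurd h' h⟩
  choose c hcC hcpos using hwit
  refine ⟨∑ l ∈ s, c l, fun l hl => ?_, fun l hl h => ?_⟩
  · rw [map_sum]
    exact Finset.sum_nonneg fun l' _ => hcC l' l hl
  · rw [map_sum]
    exact (hcpos l h).trans_le (Finset.single_le_sum (fun l' _ => hcC l' l hl) hl)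

theorem mem_spanDiff_polyhedralCone {v : W}
    (hv : ∀ l ∈ s, (∀ x ∈ polyhedralCone s, l x = 0) → l v = 0) :
    v ∈ spanDiff (polyhedralCone s) := by
  obtain ⟨x, hxC, hxpos⟩ := exists_mem_polyhedralCone_forall_pos s
  have hnear : ∀ᶠ ε in 𝓝 (0 : ℚ), x + ε • v ∈ polyhedralCone s := by
    refine (eventually_all_finset s).2 fun l hl => ?_
    by_cases hslack : ∃ x' ∈ polyhedralCone s, 0 < l x'
    · have hcont : Tendsto (fun ε : ℚ => l x + ε * l v) (𝓝 0) (𝓝 (l x + 0 * l v)) :=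
        tendsto_const_nhds.add (tendsto_id.mul_const _)
      rw [zero_mul, add_zero] at hcont
      filter_upwards [hcont.eventually (lt_mem_nhds (hxpos l hl hslack))] with ε hε
      simpa using hε.le
    · push Not at hslack
      have hlv : l v = 0 := hv l hl fun x' hx' => le_antisymm (hslack x' hx') (hx' l hl)
      exact Eventually.of_forall fun ε => by simpa [hlv] using hxC l hl
  obtain ⟨ε, hε, hεC⟩ := hnear.exists_gt
  exact mem_spanDiff_of_add_smul_mem hε.ne' hxC hεC

end

theorem span_face_eq_normalCone_perp_general
    (V : Type*) [AddCommGroup V] [Module ℚ V]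
    (P F : Set V) (hP : IsPolyhedralCone P) (hF : IsFace P F) :
    (spanDiff F : Set V) = {v : V | ∀ y ∈ normalCone P F, y v = 0} := by
  classical
  obtain ⟨s, hs⟩ := hP
  obtain ⟨y₀, hy₀⟩ := hF
  replace hs : P = polyhedralCone s := hs
  replace hy₀ : F = face P y₀ := hy₀
  subst hs hy₀
  refine Set.Subset.antisymm
    (fun v hv y hy => spanDiff_le_ker_of_mem_normalCone (fun _ hx => hx.1) hy hv) fun v hv => ?_
  rcases (face (polyhedralCone s) y₀).eq_empty_or_nonempty with hempty | hne
  · rw [hempty, normalCone_empty] at hv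
    rw [hempty, (Module.forall_dual_apply_eq_zero_iff ℚ v).1 fun y => hv y trivial]
    exact (spanDiff ∅).zero_mem
  · have hface := face_polyhedralCone_eq_insert_neg s hne
    rw [SetLike.mem_coe, hface]
    refine mem_spanDiff_polyhedralCone _ fun l hl hl0 => ?_
    rw [← hface] at hl0
    rcases Finset.mem_insert.1 hl with rfl | hls
    · simpa using hv y₀ fun x hx p hp => hx.2 p hp
    · exact hv l fun x hx p hp => (hl0 x hx).trans_le (hp l hls)

/-- The span of differences of a face equals the annihilator of its normal cone. -/
theorem span_face_eq_normalCone_perp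
    (V : Type*) [AddCommGroup V] [Module ℚ V] [FiniteDimensional ℚ V]
    (P F : Set V) (hP : IsPolyhedralCone P) (hF : IsFace P F) :
    (spanDiff F : Set V) = {v : V | ∀ y ∈ normalCone P F, y v = 0} :=
  span_face_eq_normalCone_perp_general V P F hP hF
end

section
/- Let V be a finite-dimensional rational vector space, M ⊆ V a subspace, P ⊆ V a polyhedral cone, and F an M-stable face of P (i.e., relint(F) ∩ M ≠ ∅ and ⟨F⟩ + M = V). Then the dual cone of the normal cone of F_M = F ∩ M in P_M = P ∩ M, taken inside M, equals the intersection of the dual cone of N_F P with M: N_{F_M}^∨ = N_F^∨ ∩ M. -/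
/-!
A functional on `M` in the normal cone of `F_M` vanishes on `F ∩ M` and is nonnegative on
`P ∩ M`. Since a relative-interior point `x₀ ∈ F ∩ M` can be moved inside `F` in every
direction of `⟨F⟩`, it also vanishes on `⟨F⟩ ∩ M`, so (as `⟨F⟩ + M = V`) it extends to a
functional on `V` vanishing on `⟨F⟩`. The extension is nonnegative on `P`: writing
`p = k + m` with `k ∈ ⟨F⟩`, `m ∈ M`, and choosing `δ > 0` with `x₀ - δ k ∈ F`, the point
`p + δ⁻¹ (x₀ - δ k) = m + δ⁻¹ x₀` lies in `P ∩ M`. Hence the extension lies in `N_F P`,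
which gives the nontrivial inclusion; the other one is restriction of functionals.
-/

theorem LinearMap.exists_extend_of_sup_eq_top {R V W : Type*} [CommRing R]
    [AddCommGroup V] [Module R V] [AddCommGroup W] [Module R W] {N M : Submodule R V}
    (hNM : N ⊔ M = ⊤) (f : M →ₗ[R] W) (hf : N.comap M.subtype ≤ LinearMap.ker f) :
    ∃ g : V →ₗ[R] W, N ≤ LinearMap.ker g ∧ g ∘ₗ M.subtype = f := by
  set φ : M →ₗ[R] V ⧸ N := N.mkQ ∘ₗ M.subtype
  have hφ : Function.Surjective φ := by
    rintro ⟨v⟩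
    obtain ⟨n, hn, m, hm, rfl⟩ := Submodule.mem_sup.mp (hNM ▸ Submodule.mem_top : v ∈ N ⊔ M)
    refine ⟨⟨m, hm⟩, (Submodule.Quotient.eq N).mpr ?_⟩
    simpa using N.neg_mem hn
  have hker : LinearMap.ker φ = N.comap M.subtype := by
    rw [LinearMap.ker_comp, Submodule.ker_mkQ]
  refine ⟨(LinearMap.ker φ).liftQ f (hker ▸ hf) ∘ₗ
    (φ.quotKerEquivOfSurjective hφ).symm.toLinearMap ∘ₗ N.mkQ, fun n hn => ?_, ?_⟩
  · simp [(Submodule.Quotient.mk_eq_zero N).mpr hn]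
  · ext m
    change (LinearMap.ker φ).liftQ f (hker ▸ hf)
      ((φ.quotKerEquivOfSurjective hφ).symm (φ m)) = f m
    rw [LinearMap.quotKerEquivOfSurjective_symm_apply, Submodule.liftQ_apply]

section

variable {W : Type*} [AddCommGroup W] [Module ℚ W]

theorem IsPolyhedralCone.exists_pointedCone {P : Set W} (hP : IsPolyhedralCone P) :
    ∃ C : PointedCone ℚ W, (C : Set W) = P := by
  obtain ⟨s, rfl⟩ := hP
  exact ⟨PointedCone.dual LinearMap.id (s : Set (Module.Dual ℚ W)), rfl⟩

theorem comp_mem_normalCone_preimage {W' : Type*} [AddCommGroup W'] [Module ℚ W']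
    (φ : W' →ₗ[ℚ] W) {P F : Set W} {y : Module.Dual ℚ W} (hy : y ∈ normalCone P F) :
    y ∘ₗ φ ∈ normalCone (φ ⁻¹' P) (φ ⁻¹' F) :=
  fun _ hx _ hp => hy _ hx _ hp

theorem mem_normalCone_iff {C : PointedCone ℚ W} {F : Set W} (hFC : F ⊆ C) (hF : F.Nonempty)
    {y : Module.Dual ℚ W} :
    y ∈ normalCone C F ↔ (∀ x ∈ F, y x = 0) ∧ ∀ p ∈ C, 0 ≤ y p := by
  refine ⟨fun hy => ?_, fun ⟨hF0, hC⟩ x hx p hp => hF0 x hx ▸ hC p hp⟩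
  have hF0 : ∀ x ∈ F, y x = 0 := fun x hx => by
    have h0 := hy x hx 0 C.zero_mem
    have h2 := hy x hx (x + x) (C.add_mem (hFC hx) (hFC hx))
    rw [map_zero] at h0
    rw [map_add] at h2
    linarith
  obtain ⟨x, hx⟩ := hF
  exact ⟨hF0, fun p hp => hF0 x hx ▸ hy x hx p hp⟩

theorem IsFace.subset {P F : Set W} (hF : IsFace P F) : F ⊆ P := by
  obtain ⟨y, rfl⟩ := hF
  exact fun _ hx => hx.1

theorem IsFace.exists_pointedCone {C : PointedCone ℚ W} {F : Set W} (hF : IsFace C F)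
    (hne : F.Nonempty) : ∃ D : PointedCone ℚ W, (D : Set W) = F := by
  have hFC := hF.subset
  obtain ⟨y, hFy⟩ := hF
  have hy : y ∈ normalCone C F := fun x hx p hp => (hFy ▸ hx).2 p hp
  obtain ⟨hF0, hC⟩ := (mem_normalCone_iff hFC hne).mp hy
  refine ⟨C ⊓ PointedCone.ofSubmodule (LinearMap.ker y), Set.ext fun x => ⟨?_, fun hx => ?_⟩⟩
  · rintro ⟨hxC, hx0 : y x = 0⟩
    rw [hFy]
    exact ⟨hxC, fun p hp => hx0 ▸ hC p hp⟩
  · exact ⟨hFC hx, hF0 x hx⟩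

theorem PointedCone.exists_sub_eq_of_mem_spanDiff {D : PointedCone ℚ W} {v : W}
    (hv : v ∈ spanDiff (D : Set W)) : ∃ a ∈ D, ∃ b ∈ D, a - b = v := by
  induction hv using Submodule.span_induction with
  | mem w hw =>
    obtain ⟨a, ha, b, hb, rfl⟩ := hw
    exact ⟨a, ha, b, hb, rfl⟩
  | zero => exact ⟨0, D.zero_mem, 0, D.zero_mem, sub_zero 0⟩
  | add v w _ _ ihv ihw =>
    obtain ⟨a, ha, b, hb, rfl⟩ := ihv
    obtain ⟨c, hc, d, hd, rfl⟩ := ihw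
    exact ⟨a + c, D.add_mem ha hc, b + d, D.add_mem hb hd, by abel⟩
  | smul c v _ ih =>
    obtain ⟨a, ha, b, hb, rfl⟩ := ih
    rcases le_total 0 c with hc | hc
    · exact ⟨c • a, D.smul_mem hc ha, c • b, D.smul_mem hc hb, (smul_sub c a b).symm⟩
    · refine ⟨(-c) • b, D.smul_mem (neg_nonneg.mpr hc) hb,
        (-c) • a, D.smul_mem (neg_nonneg.mpr hc) ha, ?_⟩
      module

theorem PointedCone.exists_pos_add_smul_mem_of_mem_relint {D : PointedCone ℚ W} {x v : W}
    (hx : x ∈ relint (D : Set W)) (hv : v ∈ spanDiff (D : Set W)) :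
    ∃ δ : ℚ, 0 < δ ∧ x + δ • v ∈ D := by
  obtain ⟨a, ha, b, hb, rfl⟩ := D.exists_sub_eq_of_mem_spanDiff hv
  obtain ⟨ε, hε, hεD⟩ := hx.2 b hb
  -- `x` is a convex combination of `x + ε (x - b)` and `b`; replacing `b` by `a` moves it
  -- by a positive multiple of `a - b`.
  have hmem : (1 + ε)⁻¹ • ((x + ε • (x - b)) + ε • a) ∈ D :=
    D.smul_mem (by positivity) (D.add_mem hεD (D.smul_mem hε.le ha))
  refine ⟨(1 + ε)⁻¹ * ε, by positivity, ?_⟩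
  convert hmem using 1
  have : (1 : ℚ) + ε ≠ 0 := by positivity
  match_scalars <;> field_simp

end

section

variable {V : Type*} [AddCommGroup V] [Module ℚ V] {M : Submodule ℚ V} {C D : PointedCone ℚ V}
  {x₀ : V}

theorem eq_zero_of_mem_spanDiff_of_mem_normalCone (hDC : D ≤ C)
    (hx₀ : x₀ ∈ relint (D : Set V)) (hx₀M : x₀ ∈ M) {y : Module.Dual ℚ M}
    (hy : y ∈ normalCone (C.comap M.subtype) (D.comap M.subtype)) {m : M}
    (hm : (m : V) ∈ spanDiff (D : Set V)) : y m = 0 := by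
  set x₀' : M := ⟨x₀, hx₀M⟩
  have hyD := ((mem_normalCone_iff (C := C.comap M.subtype) (fun _ hx => hDC hx)
    ⟨x₀', hx₀.1⟩).mp hy).1
  obtain ⟨δ, hδ, hδD⟩ := D.exists_pos_add_smul_mem_of_mem_relint hx₀ hm
  have h := hyD (x₀' + δ • m) hδD
  rw [map_add, map_smul, hyD x₀' hx₀.1, zero_add, smul_eq_mul] at h
  exact (mul_eq_zero.mp h).resolve_left hδ.ne'

theorem exists_extend_mem_normalCone (hDC : D ≤ C) (hx₀ : x₀ ∈ relint (D : Set V))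
    (hx₀M : x₀ ∈ M) (hspan : spanDiff (D : Set V) ⊔ M = ⊤) {y : Module.Dual ℚ M}
    (hy : y ∈ normalCone (C.comap M.subtype) (D.comap M.subtype)) :
    ∃ z ∈ normalCone (C : Set V) D, z ∘ₗ M.subtype = y := by
  set x₀' : M := ⟨x₀, hx₀M⟩
  obtain ⟨hyD, hyC⟩ := (mem_normalCone_iff (C := C.comap M.subtype) (fun _ hx => hDC hx)
    ⟨x₀', hx₀.1⟩).mp hy
  obtain ⟨z, hzK, hzM⟩ := LinearMap.exists_extend_of_sup_eq_top hspan y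
    fun m hm => eq_zero_of_mem_spanDiff_of_mem_normalCone hDC hx₀ hx₀M hy hm
  have hzM' (m : M) : z m = y m := LinearMap.congr_fun hzM m
  have hz₀ : z x₀ = 0 := (hzM' x₀').trans (hyD x₀' hx₀.1)
  refine ⟨z, (mem_normalCone_iff hDC ⟨x₀, hx₀.1⟩).mpr ⟨fun x hx => ?_, fun p hp => ?_⟩, hzM⟩
  · have h : z (x - x₀) = 0 := hzK (Submodule.subset_span ⟨x, hx, x₀, hx₀.1, rfl⟩)
    rwa [map_sub, hz₀, sub_zero] at h
  · obtain ⟨k, hk, m, hm, rfl⟩ := Submodule.mem_sup.mp (hspan ▸ Submodule.mem_top : p ∈ _)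
    obtain ⟨δ, hδ, hδD⟩ := D.exists_pos_add_smul_mem_of_mem_relint hx₀ (neg_mem hk)
    have hmem : (⟨m, hm⟩ + δ⁻¹ • x₀' : M) ∈ C.comap M.subtype := by
      rw [PointedCone.mem_comap]
      convert C.add_mem hp (C.smul_mem (inv_nonneg.mpr hδ.le) (hDC hδD)) using 1
      have : δ ≠ 0 := hδ.ne'
      simp only [map_add, map_smul, Submodule.subtype_apply, x₀']
      match_scalars <;> field_simp; ring
    have h := hyC _ hmem
    rw [map_add, map_smul, hyD x₀' hx₀.1, smul_zero, add_zero, ← hzM'] at h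
    rwa [map_add, LinearMap.mem_ker.mp (hzK hk), zero_add]

end

theorem dual_normalCone_inter_general
    (V : Type*) [AddCommGroup V] [Module ℚ V]
    (M : Submodule ℚ V) (P F : Set V)
    (hP : IsPolyhedralCone P) (hF : IsFace P F)
    (hrel : (relint F ∩ (M : Set V)).Nonempty)
    (hspan : spanDiff F ⊔ M = ⊤) :
    {x : M | ∀ y ∈ normalCone {x : M | (x : V) ∈ P} {x : M | (x : V) ∈ F}, 0 ≤ y x}
      = {x : M | ∀ y ∈ normalCone P F, 0 ≤ y (x : V)} := by
  obtain ⟨C, rfl⟩ := hP.exists_pointedCone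
  obtain ⟨x₀, hx₀, hx₀M⟩ := hrel
  have hDC := hF.subset
  obtain ⟨D, rfl⟩ := hF.exists_pointedCone ⟨x₀, hx₀.1⟩
  ext x
  refine ⟨fun hx y hy => hx _ (comp_mem_normalCone_preimage M.subtype hy), fun hx y hy => ?_⟩
  obtain ⟨z, hz, rfl⟩ := exists_extend_mem_normalCone hDC hx₀ hx₀M hspan hy
  exact hx z hz

/-- For an `M`-stable face `F` of `P`, the dual cone of the normal cone of `F ∩ M` in
`P ∩ M`, taken inside `M`, equals the intersection of the dual cone of `N_F P` with `M`. -/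
theorem dual_normalCone_inter
    (V : Type*) [AddCommGroup V] [Module ℚ V] [FiniteDimensional ℚ V]
    (M : Submodule ℚ V) (P F : Set V)
    (hP : IsPolyhedralCone P) (hF : IsFace P F)
    (hrel : (relint F ∩ (M : Set V)).Nonempty)
    (hspan : spanDiff F ⊔ M = ⊤) :
    {x : M | ∀ y ∈ normalCone {x : M | (x : V) ∈ P} {x : M | (x : V) ∈ F}, 0 ≤ y x}
      = {x : M | ∀ y ∈ normalCone P F, 0 ≤ y (x : V)} :=
  dual_normalCone_inter_general V M P F hP hF hrel hspan
end
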